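/- arXiv:2509.04172 — 6 statements merged into one kernel-verified Lean document; each statement's English description precedes it below -/
import Mathlib

section
/- Let r ∈ ℕ, 𝐦 ∈ ℕ^{r+1}, and w : ℕ_𝐦 → ℚ. For 𝐮, 𝐢 ∈ ℕ^{r+1} with 𝐮 + 𝐢 ∈ ℕ_𝐦, define c_𝐢^𝐮 = 2^{−|𝐢|} · Σ_{𝟎 ≤ 𝐥 ≤ 𝐢} (−1)^{|𝐢|−|𝐥|} · binom(𝐢,𝐥) · w_{𝐦−𝐮−𝐥} ∈ ℚ. Then: (a) c_𝟎^𝐮 = w_{𝐦−𝐮} for all 𝐮 ∈ ℕ_𝐦; (b) for every index j ∈ {0,…,r} with i_j ≥ 1, one has c_𝐢^𝐮 = (c_{𝐢−e_j}^{𝐮+e_j} − c_{𝐢−e_j}^{𝐮})/2, where e_j is the j-th standard basis vector (so the triangle recursion is well defined, independent of the choice of j, and computed by this closed formula); (c) the vector b given by b_𝐢 = c_𝐢^𝟎 satisfies M_𝐦 b = w, i.e. for every 𝐬 ∈ ℕ_𝐦, Σ_{𝐢 ∈ ℕ_𝐦} 2^{|𝐢|} · binom(𝐦−𝐬, 𝐢)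 · b_𝐢 = w_𝐬. -/
/-- The closed formula for the entries of the multireal triangle:
`c_𝐢^𝐮 = 2^{-|𝐢|} · Σ_{𝟎 ≤ 𝐥 ≤ 𝐢} (-1)^{|𝐢|-|𝐥|} binom(𝐢,𝐥) w_{𝐦-𝐮-𝐥}`. -/
def triC (r : ℕ) (m : Fin (r + 1) → ℕ) (w : (Fin (r + 1) → ℕ) → ℚ)
    (u i : Fin (r + 1) → ℕ) : ℚ :=
  ((2 : ℚ) ^ (∑ j, i j))⁻¹ *
    ∑ l : (j : Fin (r + 1)) → Fin (i j + 1),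
      (-1 : ℚ) ^ ((∑ j, i j) - ∑ j, (l j : ℕ)) *
        (∏ j, ((i j).choose (l j : ℕ) : ℚ)) *
        w (fun j => m j - u j - (l j : ℕ))

/-
With `F v = w (𝐦 - v)`, the entry `c_𝐢^𝐮` is `2^{-|𝐢|}` times the iterated forward difference
`(Δ^𝐢 F)(𝐮)`. Encode `Δ^𝐢` as the element `∏_j (E_j - 1)^{i_j}` of the group algebra `ℚ[ℕ^{r+1}]`,
where `E_j` is the shift by `e_j` and an element `Σ c_g g` acts on `F` at `𝐮` by `Σ c_g F(𝐮 + g)`.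
Then (b) is the factorisation `∏_k (E_k - 1)^{i_k} = (E_j - 1) · ∏_k (E_k - 1)^{(𝐢 - e_j)_k}`, and
(c) is Newton's forward-difference formula, which comes from the binomial identity
`Σ_𝐢 binom(𝐧,𝐢) ∏_j (E_j - 1)^{i_j} = ∏_j E_j^{n_j}` with `𝐧 = 𝐦 - 𝐬`.
-/

open Finset

lemma Fin.sum_choose_mul_pow_eq_add_one_pow {A : Type*} [CommSemiring A] (x : A) {n M : ℕ}
    (h : n ≤ M) :
    ∑ k : Fin (M + 1), (n.choose k : A) * x ^ (k : ℕ) = (x + 1) ^ n := by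
  rw [add_pow, Fin.sum_univ_eq_sum_range (fun k => (n.choose k : A) * x ^ k)]
  simp_rw [one_pow, mul_one, mul_comm (x ^ _)]
  exact (sum_subset (range_subset_range.2 (by omega)) fun k _ hk => by
    rw [Nat.choose_eq_zero_of_lt (by simpa using hk), Nat.cast_zero, zero_mul]).symm

namespace AddMonoidAlgebra

section shiftEval

variable {R G : Type*} [CommSemiring R] [AddCommMonoid G]

noncomputable def shiftEval (F : G → R) (u : G) : AddMonoidAlgebra R G →ₗ[R] R :=
  Finsupp.linearCombination R (fun g => F (u + g)) ∘ₗ (coeffLinearEquiv R).toLinearMap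

@[simp] lemma shiftEval_single (F : G → R) (u g : G) (c : R) :
    shiftEval F u (single g c) = c * F (u + g) := by
  simp [shiftEval]

lemma shiftEval_single_mul (F : G → R) (u g : G) (c : R) (p : AddMonoidAlgebra R G) :
    shiftEval F u (single g c * p) = c * shiftEval F (u + g) p := by
  induction p using AddMonoidAlgebra.induction_linear with
  | zero => simp
  | add p q hp hq => simp only [mul_add, map_add, hp, hq]
  | single g' c' => simp [single_mul_single, add_assoc, mul_assoc]

lemma shiftEval_natCast_mul (F : G → R) (u : G) (n : ℕ) (p : AddMonoidAlgebra R G) :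
    shiftEval F u (n * p) = n * shiftEval F u p := by
  rw [natCast_def, shiftEval_single_mul, add_zero]

end shiftEval

section fwdDiffOp

variable {R ι : Type*} [CommRing R] [DecidableEq ι]

noncomputable def unitShift (j : ι) : AddMonoidAlgebra R (ι → ℕ) := single (Pi.single j 1) 1

lemma unitShift_pow (j : ι) (k : ℕ) :
    (unitShift j : AddMonoidAlgebra R (ι → ℕ)) ^ k = single (Pi.single j k) 1 := by
  rw [unitShift, single_pow, one_pow]
  congr 1
  ext i
  simp [Pi.single_apply]

lemma shiftEval_unitShift_sub_one_mul (F : (ι → ℕ) → R) (u : ι → ℕ) (j : ι)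
    (p : AddMonoidAlgebra R (ι → ℕ)) :
    shiftEval F u ((unitShift j - 1) * p)
      = shiftEval F (u + Pi.single j 1) p - shiftEval F u p := by
  rw [sub_mul, map_sub, unitShift, shiftEval_single_mul, one_mul, one_mul]

lemma unitShift_sub_one_pow (j : ι) (n : ℕ) :
    ((unitShift j - 1 : AddMonoidAlgebra R (ι → ℕ))) ^ n
      = ∑ k : Fin (n + 1), single (Pi.single j k) ((-1) ^ (n - k) * (n.choose k : R)) := by
  rw [sub_eq_add_neg, add_pow, ← Fin.sum_univ_eq_sum_range]
  refine sum_congr rfl fun k _ => ?_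
  rw [unitShift_pow, neg_pow, one_pow, mul_one, one_def, ← single_neg, single_pow, smul_zero,
    natCast_def, single_mul_single, single_mul_single, add_zero, add_zero, one_mul]

variable [Fintype ι]

noncomputable def fwdDiffOp (i : ι → ℕ) : AddMonoidAlgebra R (ι → ℕ) :=
  ∏ j, (unitShift j - 1) ^ i j

@[simp] lemma fwdDiffOp_zero : (fwdDiffOp 0 : AddMonoidAlgebra R (ι → ℕ)) = 1 := by
  simp [fwdDiffOp]

lemma fwdDiffOp_add (i i' : ι → ℕ) :
    (fwdDiffOp (i + i') : AddMonoidAlgebra R (ι → ℕ)) = fwdDiffOp i * fwdDiffOp i' := by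
  simp [fwdDiffOp, pow_add, prod_mul_distrib]

lemma fwdDiffOp_single_one (j : ι) :
    (fwdDiffOp (Pi.single j 1) : AddMonoidAlgebra R (ι → ℕ)) = unitShift j - 1 := by
  simp [fwdDiffOp, Pi.single_apply]

lemma fwdDiffOp_eq_sum (i : ι → ℕ) :
    (fwdDiffOp i : AddMonoidAlgebra R (ι → ℕ))
      = ∑ l : (j : ι) → Fin (i j + 1), single (fun j => (l j : ℕ))
          ((-1) ^ (∑ j, i j - ∑ j, (l j : ℕ)) * ∏ j, ((i j).choose (l j) : R)) := by
  simp_rw [fwdDiffOp, unitShift_sub_one_pow, Fintype.prod_sum, prod_single, univ_sum_single]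
  refine sum_congr rfl fun l _ => ?_
  rw [prod_mul_distrib, prod_pow_eq_pow_sum, sum_tsub_distrib]
  exact fun j _ => Nat.lt_succ_iff.1 (l j).isLt

lemma sum_prod_choose_mul_fwdDiffOp {n M : ι → ℕ} (h : n ≤ M) :
    ∑ i : (j : ι) → Fin (M j + 1),
        ((∏ j, (n j).choose (i j) : ℕ) : AddMonoidAlgebra R (ι → ℕ)) * fwdDiffOp (fun j => i j)
      = single n 1 := by
  simp_rw [Nat.cast_prod, fwdDiffOp, ← prod_mul_distrib]
  rw [← Fintype.prod_sum fun j (k : Fin (M j + 1)) =>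
    ((n j).choose k : AddMonoidAlgebra R (ι → ℕ)) * (unitShift j - 1) ^ (k : ℕ)]
  simp_rw [fun j => Fin.sum_choose_mul_pow_eq_add_one_pow
      (unitShift j - 1 : AddMonoidAlgebra R (ι → ℕ)) (h j), sub_add_cancel, unitShift_pow, prod_single, univ_sum_single, prod_const_one]

end fwdDiffOp

end AddMonoidAlgebra

open AddMonoidAlgebra

lemma triC_eq_shiftEval (r : ℕ) (m : Fin (r + 1) → ℕ) (w : (Fin (r + 1) → ℕ) → ℚ)
    (u i : Fin (r + 1) → ℕ) :
    triC r m w u i = ((2 : ℚ) ^ ∑ j, i j)⁻¹ * shiftEval (fun v => w (m - v)) u (fwdDiffOp i) := by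
  rw [triC, fwdDiffOp_eq_sum, map_sum]
  congr 1
  refine sum_congr rfl fun l _ => ?_
  rw [shiftEval_single]
  congr 2
  funext j
  exact (Nat.sub_add_eq _ _ _).symm

lemma triC_eq_sub_div_two (r : ℕ) (m : Fin (r + 1) → ℕ) (w : (Fin (r + 1) → ℕ) → ℚ)
    (u i : Fin (r + 1) → ℕ) (j : Fin (r + 1)) (hij : 1 ≤ i j) :
    triC r m w u i = (triC r m w (u + Pi.single j 1) (i - Pi.single j 1)
      - triC r m w u (i - Pi.single j 1)) / 2 := by
  obtain ⟨i, rfl⟩ : ∃ i' : Fin (r + 1) → ℕ, i = Pi.single j 1 + i' := by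
    refine ⟨i - Pi.single j 1, (add_tsub_cancel_of_le fun k => ?_).symm⟩
    rcases eq_or_ne k j with rfl | hk
    · simpa using hij
    · simp [hk]
  have hsum : ∑ k, (Pi.single j 1 + i : Fin (r + 1) → ℕ) k = ∑ k, i k + 1 := by
    simp [sum_add_distrib, add_comm]
  rw [add_tsub_cancel_left, triC_eq_shiftEval, triC_eq_shiftEval, triC_eq_shiftEval, fwdDiffOp_add,
    fwdDiffOp_single_one, shiftEval_unitShift_sub_one_mul, hsum, pow_succ]
  ring

lemma sum_two_pow_mul_choose_mul_triC (r : ℕ) (m : Fin (r + 1) → ℕ)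
    (w : (Fin (r + 1) → ℕ) → ℚ) (s : (j : Fin (r + 1)) → Fin (m j + 1)) :
    ∑ i : (j : Fin (r + 1)) → Fin (m j + 1),
        2 ^ (∑ j, (i j : ℕ)) * (∏ j, ((m j - (s j : ℕ)).choose ((i j : ℕ)) : ℚ)) *
          triC r m w 0 (fun j => (i j : ℕ))
      = w (fun j => (s j : ℕ)) := by
  have hle : (fun j => m j - (s j : ℕ)) ≤ m := fun j => Nat.sub_le _ _
  calc _ = ∑ i : (j : Fin (r + 1)) → Fin (m j + 1), shiftEval (fun v => w (m - v)) 0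
        (((∏ j, (m j - (s j : ℕ)).choose (i j) : ℕ) : AddMonoidAlgebra ℚ (Fin (r + 1) → ℕ)) *
          fwdDiffOp fun j => (i j : ℕ)) := by
        refine sum_congr rfl fun i _ => ?_
        rw [triC_eq_shiftEval, shiftEval_natCast_mul, Nat.cast_prod]
        field_simp
    _ = shiftEval (fun v => w (m - v)) 0 (single (fun j => m j - (s j : ℕ)) 1) := by
        rw [← map_sum, sum_prod_choose_mul_fwdDiffOp hle]
    _ = w (fun j => (s j : ℕ)) := by
        simp only [shiftEval_single, one_mul, zero_add]
        congr 1
        funext j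
        have := (s j).isLt
        simp only [Pi.sub_apply]
        omega

/-- (a) `c_𝟎^𝐮 = w_{𝐦-𝐮}`; (b) the triangle recursion
`c_𝐢^𝐮 = (c_{𝐢-e_j}^{𝐮+e_j} - c_{𝐢-e_j}^𝐮)/2` holds for any coordinate `j` with `i_j ≥ 1`;
(c) the vector `b_𝐢 = c_𝐢^𝟎` satisfies `M_𝐦 b = w`, i.e.
`Σ_{𝐢 ∈ ℕ_𝐦} 2^{|𝐢|} binom(𝐦-𝐬,𝐢) b_𝐢 = w_𝐬` for every `𝐬 ∈ ℕ_𝐦`. -/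
theorem stmt3 (r : ℕ) (m : Fin (r + 1) → ℕ) (w : (Fin (r + 1) → ℕ) → ℚ) :
    (∀ u : Fin (r + 1) → ℕ, (∀ j, u j ≤ m j) →
      triC r m w u 0 = w (fun j => m j - u j)) ∧
    (∀ u i : Fin (r + 1) → ℕ, (∀ j, u j + i j ≤ m j) →
      ∀ j : Fin (r + 1), 1 ≤ i j →
        triC r m w u i
          = (triC r m w (u + Pi.single j 1) (i - Pi.single j 1)
              - triC r m w u (i - Pi.single j 1)) / 2) ∧
    (∀ s : (j : Fin (r + 1)) → Fin (m j + 1),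
      ∑ i : (j : Fin (r + 1)) → Fin (m j + 1),
        2 ^ (∑ j, (i j : ℕ)) * (∏ j, ((m j - (s j : ℕ)).choose ((i j : ℕ)) : ℚ)) *
          triC r m w 0 (fun j => (i j : ℕ))
        = w (fun j => (s j : ℕ))) :=
  ⟨fun u _ => by simp [triC_eq_shiftEval, one_def]; rfl,
    fun u i _ j hij => triC_eq_sub_div_two r m w u i j hij,
    sum_two_pow_mul_choose_mul_triC r m w⟩
end

section
/- Let r ∈ ℕ, 𝐦 ∈ ℕ^{r+1}, and w : ℕ_𝐦 → ℤ. Then the following three conditions are equivalent: (1) there exists b : ℕ_𝐦 → ℤ such that for every 𝐬 ∈ ℕ_𝐦, Σ_{𝐢 ∈ ℕ_𝐦} 2^{|𝐢|} · binom(𝐦−𝐬, 𝐢) · b_𝐢 = w_𝐬 (i.e. w lies in the image M_𝐦(ℤ^{ℕ_𝐦})); (2) for every 𝐢 ∈ ℕ_𝐦, the integer 2^{|𝐢|} divides Σ_{𝟎 ≤ 𝐥 ≤ 𝐢} (−1)^{|𝐢|−|𝐥|} · binom(𝐢,𝐥) · w_{𝐦−𝐥}; (3) for all 𝐮, 𝐢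 ∈ ℕ^{r+1} with 𝐮 + 𝐢 ∈ ℕ_𝐦, the integer 2^{|𝐢|} divides Σ_{𝟎 ≤ 𝐥 ≤ 𝐢} (−1)^{|𝐢|−|𝐥|} · binom(𝐢,𝐥) · w_{𝐦−𝐮−𝐥}. -/
lemma negOnePowSub {a b : ℕ} (h : b ≤ a) : (-1:ℤ)^(a-b) = (-1)^a * (-1)^b := by
  conv_rhs => rw [← Nat.sub_add_cancel h, pow_add, mul_assoc, ← pow_add]
  rw [Even.neg_one_pow ⟨b, rfl⟩, mul_one]

lemma key1 (i : ℕ) : ∀ u k : ℕ,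
    ∑ l ∈ Finset.range (i+1), (-1:ℤ)^l * (i.choose l) * ((u+l).choose k)
      = (-1:ℤ)^i * (if i ≤ k then ((u.choose (k-i)):ℤ) else 0) := by
  induction i with
  | zero => simp
  | succ i ih =>
    intro u k
    have h1 := Finset.sum_range_succ' (fun l => (-1:ℤ)^l * ((i+1).choose l) * ((u+l).choose k)) (i+1)
    have h2 := Finset.sum_range_succ' (fun l => (-1:ℤ)^l * (i.choose l) * ((u+l).choose k)) i
    have h3 : ∑ l ∈ Finset.range (i+1), (-1:ℤ)^(l+1) * (i.choose (l+1)) * ((u+(l+1)).choose k)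
        = ∑ l ∈ Finset.range i, (-1:ℤ)^(l+1) * (i.choose (l+1)) * ((u+(l+1)).choose k) := by
      rw [Finset.sum_range_succ, Nat.choose_succ_self]
      simp
    have key : ∑ l ∈ Finset.range (i+2), (-1:ℤ)^l * ((i+1).choose l) * ((u+l).choose k)
        = (∑ l ∈ Finset.range (i+1), (-1:ℤ)^l * (i.choose l) * ((u+l).choose k))
          - ∑ l ∈ Finset.range (i+1), (-1:ℤ)^l * (i.choose l) * (((u+1)+l).choose k) := by
      rw [h1]
      have : ∀ l, ((i+1).choose (l+1) : ℤ) = (i.choose l : ℤ) + (i.choose (l+1) : ℤ) := by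
        intro l; exact_mod_cast congrArg (Nat.cast (R := ℤ)) (Nat.choose_succ_succ i l)
      calc (∑ l ∈ Finset.range (i+1), (-1:ℤ)^(l+1) * ((i+1).choose (l+1)) * ((u+(l+1)).choose k))
            + (-1:ℤ)^0 * ((i+1).choose 0) * ((u+0).choose k)
          = (∑ l ∈ Finset.range (i+1), ((-1:ℤ)^(l+1) * (i.choose l) * (((u+1)+l).choose k)
              + (-1:ℤ)^(l+1) * (i.choose (l+1)) * ((u+(l+1)).choose k))) + ((u).choose k) := by
            simp only [this]
            congr 1
            · apply Finset.sum_congr rfl; intro l _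
              have : u + (l+1) = (u+1) + l := by ring
              rw [this]; ring
            · simp
        _ = (∑ l ∈ Finset.range (i+1), (-1:ℤ)^(l+1) * (i.choose l) * (((u+1)+l).choose k))
              + ((∑ l ∈ Finset.range (i+1), (-1:ℤ)^(l+1) * (i.choose (l+1)) * ((u+(l+1)).choose k))
              + ((u).choose k)) := by rw [Finset.sum_add_distrib]; ring
        _ = _ := by
              rw [h3]
              have h4 : ∑ l ∈ Finset.range i, (-1:ℤ)^(l+1) * (i.choose (l+1)) * ((u+(l+1)).choose k)
                  = (∑ l ∈ Finset.range (i+1), (-1:ℤ)^l * (i.choose l) * ((u+l).choose k))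
                    - ((u).choose k) := by
                rw [h2]; simp
              rw [h4]
              have : ∀ l ∈ Finset.range (i+1), (-1:ℤ)^(l+1) * (i.choose l) * (((u+1)+l).choose k)
                  = -((-1:ℤ)^l * (i.choose l) * (((u+1)+l).choose k)) := by
                intro l _; ring
              rw [Finset.sum_congr rfl this, Finset.sum_neg_distrib]
              ring
    rw [key, ih u k, ih (u+1) k]
    rcases lt_trichotomy k i with h | h | h
    · rw [if_neg (by omega), if_neg (by omega), if_neg (by omega)]; ring
    · subst h
      rw [if_pos le_rfl, if_pos le_rfl, if_neg (by omega), Nat.sub_self]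
      simp
    · rw [if_pos h.le, if_pos h.le, if_pos (by omega)]
      have hd : k - i = (k - (i+1)) + 1 := by omega
      rw [hd, Nat.choose_succ_succ' u (k - (i+1))]
      push_cast
      ring

lemma key2 (L M t : ℕ) (h : L ≤ M) :
    ∑ l ∈ Finset.range (M+1), (-1:ℤ)^l * (L.choose l) * (l.choose t)
      = (-1:ℤ)^L * (if L = t then 1 else 0) := by
  have h0 : ∑ l ∈ Finset.range (M+1), (-1:ℤ)^l * (L.choose l) * (l.choose t)
      = ∑ l ∈ Finset.range (L+1), (-1:ℤ)^l * (L.choose l) * (l.choose t) := by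
    symm
    apply Finset.sum_subset
    · intro x hx; simp only [Finset.mem_range] at *; omega
    · intro x hx hx'
      simp only [Finset.mem_range] at hx hx'
      have : L.choose x = 0 := Nat.choose_eq_zero_of_lt (by omega)
      simp [this]
  have h1 := key1 L 0 t
  simp only [Nat.zero_add, zero_add] at h1
  rw [h0, h1]
  congr 1
  by_cases hLt : L ≤ t
  · rcases Nat.eq_or_lt_of_le hLt with rfl | hlt
    · simp
    · rw [if_pos hLt, if_neg (by omega)]
      have hd : t - L = (t - L - 1) + 1 := by omega
      rw [hd, Nat.choose_zero_succ]
      simp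
  · rw [if_neg hLt, if_neg (by omega)]

lemma piSumProd {r : ℕ} (n : Fin (r+1) → ℕ) (g : (j : Fin (r+1)) → ℕ → ℤ) :
    ∑ x : (j : Fin (r+1)) → Fin (n j + 1), ∏ j, g j ((x j : ℕ))
      = ∏ j, ∑ a ∈ Finset.range (n j + 1), g j a := by
  rw [← Fintype.prod_sum (fun j (a : Fin (n j + 1)) => g j (a : ℕ))]
  exact Finset.prod_congr rfl fun j _ =>
    (Fin.sum_univ_eq_sum_range (fun a => g j a) (n j + 1))

/-- The alternating sum `Σ_{𝟎 ≤ 𝐥 ≤ 𝐢} (-1)^{|𝐢|-|𝐥|} binom(𝐢,𝐥) w_{𝐦-𝐮-𝐥}` over `ℤ`. -/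
def triSum (r : ℕ) (m : Fin (r + 1) → ℕ) (w : (Fin (r + 1) → ℕ) → ℤ)
    (u i : Fin (r + 1) → ℕ) : ℤ :=
  ∑ l : (j : Fin (r + 1)) → Fin (i j + 1),
    (-1 : ℤ) ^ ((∑ j, i j) - ∑ j, (l j : ℕ)) *
      (∏ j, ((i j).choose (l j : ℕ) : ℤ)) *
      w (fun j => m j - u j - (l j : ℕ))

lemma triSum_eq (r : ℕ) (m : Fin (r+1) → ℕ) (w : (Fin (r + 1) → ℕ) → ℤ)
    (u i : Fin (r + 1) → ℕ) :
    triSum r m w u i = (-1:ℤ)^(∑ j, i j) *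
      ∑ l : (j : Fin (r+1)) → Fin (i j + 1),
        (∏ j, ((i j).choose (l j : ℕ) : ℤ)) *
        ((-1:ℤ)^(∑ j, (l j : ℕ)) * w (fun j => m j - u j - (l j : ℕ))) := by
  rw [triSum, Finset.mul_sum]
  apply Finset.sum_congr rfl
  intro l _
  have hle : (∑ j, (l j:ℕ)) ≤ ∑ j, i j :=
    Finset.sum_le_sum fun j _ => Nat.lt_succ_iff.mp (l j).isLt
  rw [negOnePowSub hle]; ring

lemma reindex {r : ℕ} (i N : Fin (r+1) → ℕ) (h : ∀ j, i j ≤ N j)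
    (F : (Fin (r+1) → ℕ) → ℤ) :
    ∑ l : (j : Fin (r+1)) → Fin (i j + 1),
        (∏ j, ((i j).choose (l j : ℕ) : ℤ)) * F (fun j => (l j : ℕ))
    = ∑ l : (j : Fin (r+1)) → Fin (N j + 1),
        (∏ j, ((i j).choose (l j : ℕ) : ℤ)) * F (fun j => (l j : ℕ)) := by
  apply Finset.sum_of_injOn (fun l j => Fin.castLE (by have := h j; omega) (l j))
  · intro a _ b _ hab
    funext j
    exact Fin.ext (by simpa using congrArg Fin.val (congrFun hab j))
  · intro a _; simp
  · intro l _ hl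
    have hex : ∃ j, i j < (l j : ℕ) := by
      by_contra hc
      push_neg at hc
      apply hl
      refine ⟨fun j => ⟨(l j : ℕ), by have := hc j; omega⟩, by simp, ?_⟩
      funext j; exact Fin.ext rfl
    obtain ⟨j, hj⟩ := hex
    have hz : (((i j).choose ((l j : ℕ))) : ℤ) = 0 := by
      rw [Nat.choose_eq_zero_of_lt hj]; simp
    rw [Finset.prod_eq_zero (Finset.mem_univ j) hz, zero_mul]
  · intro l _; rfl

lemma lemA {r : ℕ} (m : Fin (r+1) → ℕ) (w : (Fin (r + 1) → ℕ) → ℤ)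
    (b : (Fin (r + 1) → ℕ) → ℤ)
    (hb : ∀ s : (j : Fin (r + 1)) → Fin (m j + 1),
        ∑ k : (j : Fin (r + 1)) → Fin (m j + 1),
          2 ^ (∑ j, (k j : ℕ)) * (∏ j, ((m j - (s j : ℕ)).choose ((k j : ℕ)) : ℤ)) *
            b (fun j => (k j : ℕ))
          = w (fun j => (s j : ℕ)))
    (u i : Fin (r + 1) → ℕ) (hui : ∀ j, u j + i j ≤ m j) :
    (2 : ℤ) ^ (∑ j, i j) ∣ triSum r m w u i := by
  rw [triSum_eq]
  have hw : ∀ l : (j : Fin (r+1)) → Fin (i j + 1),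
      w (fun j => m j - u j - (l j : ℕ))
      = ∑ k : (j : Fin (r + 1)) → Fin (m j + 1),
          2 ^ (∑ j, (k j : ℕ)) * (∏ j, ((u j + (l j : ℕ)).choose ((k j : ℕ)) : ℤ)) *
            b (fun j => (k j : ℕ)) := by
    intro l
    have hlij : ∀ j, (l j : ℕ) ≤ i j := fun j => Nat.lt_succ_iff.mp (l j).isLt
    have hs : ∀ j, m j - u j - (l j : ℕ) < m j + 1 := fun j => by have := hui j; omega
    have hbs := hb (fun j => ⟨m j - u j - (l j : ℕ), hs j⟩)
    have harg : ∀ j (kj : ℕ), (m j - (m j - u j - (l j : ℕ))).choose kj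
        = (u j + (l j : ℕ)).choose kj := by
      intro j kj
      have h1 := hui j; have h2 := hlij j
      have h3 : m j - (m j - u j - (l j : ℕ)) = u j + (l j : ℕ) := by clear hbs hb w b; omega
      rw [h3]
    simp only [harg] at hbs
    exact hbs.symm
  have step1 : (∑ l : (j : Fin (r+1)) → Fin (i j + 1),
        (∏ j, ((i j).choose (l j : ℕ) : ℤ)) *
        ((-1:ℤ)^(∑ j, (l j : ℕ)) * w (fun j => m j - u j - (l j : ℕ))))
      = ∑ k : (j : Fin (r + 1)) → Fin (m j + 1),
          (2 ^ (∑ j, (k j : ℕ)) * b (fun j => (k j : ℕ))) *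
          ∏ j, ∑ a ∈ Finset.range (i j + 1),
            (-1:ℤ)^a * ((i j).choose a : ℤ) * ((u j + a).choose (k j : ℕ) : ℤ) := by
    calc (∑ l : (j : Fin (r+1)) → Fin (i j + 1),
            (∏ j, ((i j).choose (l j : ℕ) : ℤ)) *
            ((-1:ℤ)^(∑ j, (l j : ℕ)) * w (fun j => m j - u j - (l j : ℕ))))
        = ∑ l : (j : Fin (r+1)) → Fin (i j + 1),
            ∑ k : (j : Fin (r + 1)) → Fin (m j + 1),
              (∏ j, ((-1:ℤ)^(l j : ℕ) * ((i j).choose (l j : ℕ) : ℤ)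
                  * ((u j + (l j : ℕ)).choose (k j : ℕ) : ℤ))) *
              (2 ^ (∑ j, (k j : ℕ)) * b (fun j => (k j : ℕ))) := by
          apply Finset.sum_congr rfl
          intro l _
          rw [hw l, Finset.mul_sum, Finset.mul_sum]
          apply Finset.sum_congr rfl
          intro k _
          rw [Finset.prod_mul_distrib, Finset.prod_mul_distrib,
            Finset.prod_pow_eq_pow_sum]
          ring
      _ = ∑ k : (j : Fin (r + 1)) → Fin (m j + 1),
            ∑ l : (j : Fin (r+1)) → Fin (i j + 1),
              (∏ j, ((-1:ℤ)^(l j : ℕ) * ((i j).choose (l j : ℕ) : ℤ)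
                  * ((u j + (l j : ℕ)).choose (k j : ℕ) : ℤ))) *
              (2 ^ (∑ j, (k j : ℕ)) * b (fun j => (k j : ℕ))) := Finset.sum_comm
      _ = _ := by
          apply Finset.sum_congr rfl
          intro k _
          rw [← Finset.sum_mul, mul_comm]
          congr 1
          exact piSumProd i (fun j a => (-1:ℤ)^a * ((i j).choose a : ℤ)
            * ((u j + a).choose (k j : ℕ) : ℤ))
  rw [step1]
  apply Dvd.dvd.mul_left
  apply Finset.dvd_sum
  intro k _
  by_cases hik : ∀ j, i j ≤ (k j : ℕ)
  · apply Dvd.dvd.mul_right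
    apply Dvd.dvd.mul_right
    exact pow_dvd_pow 2 (Finset.sum_le_sum fun j _ => hik j)
  · push_neg at hik
    obtain ⟨j, hj⟩ := hik
    have hz : (∑ a ∈ Finset.range (i j + 1),
        (-1:ℤ)^a * ((i j).choose a : ℤ) * ((u j + a).choose (k j : ℕ) : ℤ)) = 0 := by
      have hneg : ¬ (i j ≤ (k j : ℕ)) := by clear hb hw step1 w b; omega
      have hk := key1 (i j) (u j) ((k j : ℕ))
      rw [if_neg hneg, mul_zero] at hk
      exact hk
    rw [Finset.prod_eq_zero (Finset.mem_univ j) hz, mul_zero]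
    exact dvd_zero _

lemma lemB {r : ℕ} (m : Fin (r+1) → ℕ) (w : (Fin (r + 1) → ℕ) → ℤ)
    (h2 : ∀ i : (j : Fin (r + 1)) → Fin (m j + 1),
        (2 : ℤ) ^ (∑ j, (i j : ℕ)) ∣ triSum r m w 0 (fun j => (i j : ℕ))) :
    ∃ b : (Fin (r + 1) → ℕ) → ℤ,
      ∀ s : (j : Fin (r + 1)) → Fin (m j + 1),
        ∑ i : (j : Fin (r + 1)) → Fin (m j + 1),
          2 ^ (∑ j, (i j : ℕ)) * (∏ j, ((m j - (s j : ℕ)).choose ((i j : ℕ)) : ℤ)) *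
            b (fun j => (i j : ℕ))
          = w (fun j => (s j : ℕ)) := by
  classical
  refine ⟨fun v => triSum r m w 0 v / 2 ^ (∑ j, v j), ?_⟩
  intro s
  have hsj : ∀ j, (s j : ℕ) ≤ m j := fun j => Nat.lt_succ_iff.mp (s j).isLt
  have hstep : ∀ i : (j : Fin (r + 1)) → Fin (m j + 1),
      2 ^ (∑ j, (i j : ℕ)) * (∏ j, ((m j - (s j : ℕ)).choose ((i j : ℕ)) : ℤ)) *
        (triSum r m w 0 (fun j => (i j : ℕ)) / 2 ^ (∑ j, (i j : ℕ)))
      = (∏ j, ((m j - (s j : ℕ)).choose ((i j : ℕ)) : ℤ))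
          * triSum r m w 0 (fun j => (i j : ℕ)) := by
    intro i
    rw [mul_comm ((2:ℤ) ^ _) _, mul_assoc, Int.mul_ediv_cancel' (h2 i)]
  have htri : ∀ i : (j : Fin (r + 1)) → Fin (m j + 1),
      triSum r m w 0 (fun j => (i j : ℕ))
      = (-1:ℤ)^(∑ j, (i j : ℕ)) *
        ∑ t : (j : Fin (r + 1)) → Fin (m j + 1),
          (∏ j, ((i j : ℕ).choose (t j : ℕ) : ℤ)) *
          ((-1:ℤ)^(∑ j, (t j : ℕ)) * w (fun j => m j - (t j : ℕ))) := by
    intro i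
    rw [triSum_eq]
    congr 1
    exact reindex (fun j => (i j : ℕ)) m (fun j => Nat.lt_succ_iff.mp (i j).isLt)
      (fun v => (-1:ℤ)^(∑ j, v j) * w (fun j => m j - v j))
  have hmain : (∑ i : (j : Fin (r + 1)) → Fin (m j + 1),
        (∏ j, ((m j - (s j : ℕ)).choose ((i j : ℕ)) : ℤ))
          * triSum r m w 0 (fun j => (i j : ℕ)))
      = w (fun j => (s j : ℕ)) := by
    have hlt : ∀ j, m j - (s j : ℕ) < m j + 1 := fun j => by omega
    calc (∑ i : (j : Fin (r + 1)) → Fin (m j + 1),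
            (∏ j, ((m j - (s j : ℕ)).choose ((i j : ℕ)) : ℤ))
              * triSum r m w 0 (fun j => (i j : ℕ)))
        = ∑ i : (j : Fin (r + 1)) → Fin (m j + 1),
            ∑ t : (j : Fin (r + 1)) → Fin (m j + 1),
              (∏ j, ((-1:ℤ)^(i j : ℕ) * ((m j - (s j : ℕ)).choose ((i j : ℕ)) : ℤ)
                  * (((i j : ℕ)).choose ((t j : ℕ)) : ℤ))) *
              ((-1:ℤ)^(∑ j, (t j : ℕ)) * w (fun j => m j - (t j : ℕ))) := by
          apply Finset.sum_congr rfl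
          intro i _
          rw [htri i, Finset.mul_sum, Finset.mul_sum]
          apply Finset.sum_congr rfl
          intro t _
          rw [Finset.prod_mul_distrib, Finset.prod_mul_distrib,
            Finset.prod_pow_eq_pow_sum]
          ring
      _ = ∑ t : (j : Fin (r + 1)) → Fin (m j + 1),
            ∑ i : (j : Fin (r + 1)) → Fin (m j + 1),
              (∏ j, ((-1:ℤ)^(i j : ℕ) * ((m j - (s j : ℕ)).choose ((i j : ℕ)) : ℤ)
                  * (((i j : ℕ)).choose ((t j : ℕ)) : ℤ))) *
              ((-1:ℤ)^(∑ j, (t j : ℕ)) * w (fun j => m j - (t j : ℕ))) := Finset.sum_comm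
      _ = ∑ t : (j : Fin (r + 1)) → Fin (m j + 1),
            ((-1:ℤ)^(∑ j, (t j : ℕ)) * w (fun j => m j - (t j : ℕ))) *
            ∏ j, ∑ a ∈ Finset.range (m j + 1),
              (-1:ℤ)^a * ((m j - (s j : ℕ)).choose a : ℤ) * ((a).choose ((t j : ℕ)) : ℤ) := by
          apply Finset.sum_congr rfl
          intro t _
          rw [← Finset.sum_mul, mul_comm]
          congr 1
          exact piSumProd m (fun j a => (-1:ℤ)^a * ((m j - (s j : ℕ)).choose a : ℤ)
            * ((a).choose ((t j : ℕ)) : ℤ))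
      _ = ∑ t : (j : Fin (r + 1)) → Fin (m j + 1),
            ((-1:ℤ)^(∑ j, (t j : ℕ)) * w (fun j => m j - (t j : ℕ))) *
            ∏ j, ((-1:ℤ)^(m j - (s j : ℕ)) *
              (if m j - (s j : ℕ) = (t j : ℕ) then (1:ℤ) else 0)) := by
          apply Finset.sum_congr rfl
          intro t _
          congr 1
          apply Finset.prod_congr rfl
          intro j _
          exact key2 (m j - (s j : ℕ)) (m j) ((t j : ℕ)) (Nat.sub_le _ _)
      _ = w (fun j => (s j : ℕ)) := by
          rw [Fintype.sum_eq_single (fun j => (⟨m j - (s j : ℕ), hlt j⟩ : Fin (m j + 1)))]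
          · have hv : ∀ j : Fin (r+1),
                (((⟨m j - (s j : ℕ), hlt j⟩ : Fin (m j + 1))) : ℕ) = m j - (s j : ℕ) :=
              fun j => rfl
            simp only [hv, if_true, mul_one]
            rw [Finset.prod_pow_eq_pow_sum]
            rw [show (fun j => m j - (m j - (s j : ℕ))) = (fun j => (s j : ℕ)) from
              funext fun j => Nat.sub_sub_self (hsj j)]
            have hone : ((-1:ℤ)^(∑ j, (m j - (s j : ℕ))))
                * ((-1:ℤ)^(∑ j, (m j - (s j : ℕ)))) = 1 := by
              rw [← pow_add]; exact Even.neg_one_pow ⟨_, rfl⟩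
            linear_combination (w (fun j => (s j : ℕ))) * hone
          · intro t ht
            have hex : ∃ j, (t j : ℕ) ≠ m j - (s j : ℕ) := by
              by_contra hc
              push_neg at hc
              exact ht (funext fun j => Fin.ext (hc j))
            obtain ⟨j, hj⟩ := hex
            have hz : ((-1:ℤ)^(m j - (s j : ℕ)) *
                if m j - (s j : ℕ) = (t j : ℕ) then (1:ℤ) else 0) = 0 := by
              rw [if_neg (fun h => hj h.symm), mul_zero]
            rw [Finset.prod_eq_zero (Finset.mem_univ j) hz, mul_zero]
  exact (Finset.sum_congr rfl (fun i _ => hstep i)).trans hmain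

/-- For an integer vector `w : ℕ_𝐦 → ℤ`, the following are equivalent:
(1) `w` lies in the image `M_𝐦(ℤ^{ℕ_𝐦})`;
(2) for every `𝐢 ∈ ℕ_𝐦`, `2^{|𝐢|}` divides `Σ_{𝐥 ≤ 𝐢} (-1)^{|𝐢|-|𝐥|} binom(𝐢,𝐥) w_{𝐦-𝐥}`;
(3) for all `𝐮, 𝐢` with `𝐮 + 𝐢 ∈ ℕ_𝐦`, `2^{|𝐢|}` divides
`Σ_{𝐥 ≤ 𝐢} (-1)^{|𝐢|-|𝐥|} binom(𝐢,𝐥) w_{𝐦-𝐮-𝐥}`. -/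
theorem stmt4 (r : ℕ) (m : Fin (r + 1) → ℕ) (w : (Fin (r + 1) → ℕ) → ℤ) :
    ((∃ b : (Fin (r + 1) → ℕ) → ℤ,
        ∀ s : (j : Fin (r + 1)) → Fin (m j + 1),
          ∑ i : (j : Fin (r + 1)) → Fin (m j + 1),
            2 ^ (∑ j, (i j : ℕ)) * (∏ j, ((m j - (s j : ℕ)).choose ((i j : ℕ)) : ℤ)) *
              b (fun j => (i j : ℕ))
            = w (fun j => (s j : ℕ)))
      ↔ (∀ i : (j : Fin (r + 1)) → Fin (m j + 1),
          (2 : ℤ) ^ (∑ j, (i j : ℕ)) ∣ triSum r m w 0 (fun j => (i j : ℕ)))) ∧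
    ((∀ i : (j : Fin (r + 1)) → Fin (m j + 1),
        (2 : ℤ) ^ (∑ j, (i j : ℕ)) ∣ triSum r m w 0 (fun j => (i j : ℕ)))
      ↔ (∀ u i : Fin (r + 1) → ℕ, (∀ j, u j + i j ≤ m j) →
          (2 : ℤ) ^ (∑ j, i j) ∣ triSum r m w u i)) := by
  constructor
  · constructor
    · rintro ⟨b, hb⟩ i
      exact lemA m w b hb 0 (fun j => (i j : ℕ))
        (fun j => by simpa using Nat.lt_succ_iff.mp (i j).isLt)
    · exact lemB m w
  · constructor
    · intro h2 u i hui
      obtain ⟨b, hb⟩ := lemB m w h2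
      exact lemA m w b hb u i hui
    · intro h3 i
      exact h3 0 (fun j => (i j : ℕ))
        (fun j => by simpa using Nat.lt_succ_iff.mp (i j).isLt)
end

section
/- Let G be an (additive) abelian group, r ∈ ℕ, 𝐦 ∈ ℕ^{r+1}, and b : ℕ_𝐦 → G. Then Σ_{𝐢 ∈ ℕ_𝐦} 2^{|𝐢|} · binom(𝐦−𝐬, 𝐢) · b_𝐢 = 0 in G for every 𝐬 ∈ ℕ_𝐦 if and only if 2^{|𝐢|} · b_𝐢 = 0 in G for every 𝐢 ∈ ℕ_𝐦. -/
/-- For an abelian group `G` and `b : ℕ_𝐦 → G`, all "multireal values"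
`Σ_{𝐢 ∈ ℕ_𝐦} (2^{|𝐢|} binom(𝐦-𝐬,𝐢)) • b_𝐢` vanish (for every `𝐬 ∈ ℕ_𝐦`) if and only if
each `b_𝐢` is `2^{|𝐢|}`-torsion, i.e. `2^{|𝐢|} • b_𝐢 = 0` for every `𝐢 ∈ ℕ_𝐦`. -/
theorem stmt5 (G : Type*) [AddCommGroup G] (r : ℕ) (m : Fin (r + 1) → ℕ)
    (b : ((j : Fin (r + 1)) → Fin (m j + 1)) → G) :
    (∀ s : (j : Fin (r + 1)) → Fin (m j + 1),
        ∑ i : (j : Fin (r + 1)) → Fin (m j + 1),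
          (2 ^ (∑ j, (i j : ℕ)) * ∏ j, (m j - (s j : ℕ)).choose ((i j : ℕ))) • b i = 0)
      ↔ (∀ i : (j : Fin (r + 1)) → Fin (m j + 1), 2 ^ (∑ j, (i j : ℕ)) • b i = 0) := by
  constructor
  · intro h
    suffices H : ∀ n (i : (j : Fin (r + 1)) → Fin (m j + 1)),
        (∑ j, (i j : ℕ)) = n → 2 ^ n • b i = 0 by
      intro i; exact H _ i rfl
    intro n
    induction n using Nat.strong_induction_on with
    | _ n ih =>
      intro i hn
      have hi : ∀ j, (i j : ℕ) ≤ m j := fun j => Nat.lt_succ_iff.mp (i j).isLt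
      have hs := h (fun j => ⟨m j - i j, by have := hi j; omega⟩)
      simp only [Fin.val_mk] at hs
      simp only [show ∀ j, m j - (m j - (i j : ℕ)) = (i j : ℕ) from
        fun j => Nat.sub_sub_self (hi j)] at hs
      rw [Finset.sum_eq_single_of_mem i (Finset.mem_univ i)] at hs
      · simpa [Nat.choose_self, hn] using hs
      · intro i' _ hne
        by_cases hle : ∀ j, (i' j : ℕ) ≤ i j
        · have hlt : (∑ j, (i' j : ℕ)) < n := by
            rw [← hn]
            refine Finset.sum_lt_sum (fun j _ => hle j) ?_
            obtain ⟨j, hj⟩ : ∃ j, i' j ≠ i j := by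
              by_contra hc; push_neg at hc; exact hne (funext hc)
            exact ⟨j, Finset.mem_univ j,
              lt_of_le_of_ne (hle j) (fun h' => hj (Fin.ext h'))⟩
          rw [mul_comm, mul_smul, ih _ hlt i' rfl, smul_zero]
        · push_neg at hle
          obtain ⟨j, hj⟩ := hle
          have hz : (∏ j, ((i j : ℕ)).choose (i' j)) = 0 :=
            Finset.prod_eq_zero (Finset.mem_univ j) (Nat.choose_eq_zero_of_lt hj)
          rw [hz, mul_zero, zero_smul]
  · intro h s
    refine Finset.sum_eq_zero fun i _ => ?_
    rw [mul_comm, mul_smul, h i, smul_zero]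
end

section
/- For every m ≥ 1 and every 0 ≤ i ≤ m, the following identity holds in ℤ[x_1,…,x_m]: B_i = Σ_{k=0}^{i} γ_{i,k}^m · L_k, where γ_{i,k}^m = Σ_{j=k}^{i} (−1)^{j−k} · mbinom(m, j−k) · binom(m−j, i−j), B_i = e_i(1+x_1,…,1+x_m) and L_k = e_k(1,…,1,x_1,…,x_m). -/
open MvPolynomial

/-- `P_i = e_i(x_1, …, x_m)`, the `i`-th elementary symmetric polynomial in the variables. -/
noncomputable def Psym (m i : ℕ) : MvPolynomial (Fin m) ℤ :=
  (((Finset.univ : Finset (Fin m)).val.map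
    fun j => (X j : MvPolynomial (Fin m) ℤ)).esymm i)

/-- `L_i = e_i(1, …, 1, x_1, …, x_m)`, the `i`-th elementary symmetric polynomial in `2m`
arguments, of which `m` are equal to `1`. -/
noncomputable def Lsym (m i : ℕ) : MvPolynomial (Fin m) ℤ :=
  ((Multiset.replicate m (1 : MvPolynomial (Fin m) ℤ) +
    (Finset.univ : Finset (Fin m)).val.map
      fun j => (X j : MvPolynomial (Fin m) ℤ)).esymm i)

/-- `B_i = e_i(1 + x_1, …, 1 + x_m)`. -/
noncomputable def Bsym (m i : ℕ) : MvPolynomial (Fin m) ℤ :=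
  (((Finset.univ : Finset (Fin m)).val.map
    fun j => (1 + X j : MvPolynomial (Fin m) ℤ)).esymm i)

/-- `γ_{i,k}^m = Σ_{j=k}^{i} (-1)^{j-k} · mbinom(m, j-k) · binom(m-j, i-j)`, where
`mbinom(n,k) = binom(n+k-1, k)`. -/
def gammaCoef (m i k : ℕ) : ℤ :=
  ∑ j ∈ Finset.Icc k i,
    (-1 : ℤ) ^ (j - k) * ((m + (j - k) - 1).choose (j - k) : ℤ) *
      ((m - j).choose (i - j) : ℤ)

/-!
With `E_s(t) = ∏_{r ∈ s} (1 + r t) = ∑_j e_j(s) tʲ`, the generating function of the `L_k` is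
`(1 + t)^m E_x(t)`, so `P_j = e_j(x)` is recovered from the `L_k` by multiplying with
`(1 + t)^{-m} = ∑_d (-1)^d mbinom(m, d) t^d`. On the other hand, Vieta's formula evaluated at
`1 + t` gives `∏ (1 + t + x_j t) = ∑_j P_j t^j (1 + t)^{m-j}`, i.e.
`B_i = ∑_{j ≤ i} binom(m - j, i - j) P_j`. Substituting the first expansion into the second and
exchanging the two sums yields exactly the coefficients `γ_{i,k}^m`.
-/

theorem Finset.sum_range_eq_sum_range_of_eq_zero {M : Type*} [AddCommMonoid M] {f : ℕ → M}
    {a b : ℕ} (ha : ∀ j ≥ a, f j = 0) (hb : ∀ j ≥ b, f j = 0) :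
    ∑ j ∈ range a, f j = ∑ j ∈ range b, f j := by
  rw [← eventually_constant_sum ha (Nat.le_add_right a b),
    eventually_constant_sum hb (Nat.le_add_left b a)]

namespace PowerSeries

theorem one_add_X_pow_mul_mk_neg_one_pow_mul_choose (R : Type*) [CommRing R] (n : ℕ) :
    ((1 + X) ^ n : R⟦X⟧) * mk (fun d => (-1) ^ d * ((n + d - 1).choose d : R)) = 1 := by
  cases n with
  | zero =>
    ext d
    cases d <;> simp
  | succ n =>
    have h := congrArg (rescale (-1 : R)) (mk_add_choose_mul_one_sub_pow_eq_one R n)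
    rw [map_mul, map_pow, map_sub, map_one, rescale_neg_one_X, sub_neg_eq_add, rescale_mk] at h
    rw [mul_comm]
    convert h using 5 with d
    rw [Nat.add_right_comm, Nat.add_sub_cancel, Nat.choose_symm_add]

end PowerSeries

namespace Multiset

variable {R : Type*} [CommSemiring R]

theorem esymm_eq_zero_of_card_lt {s : Multiset R} {k : ℕ} (h : card s < k) : s.esymm k = 0 := by
  simp [esymm, powersetCard_eq_empty _ h]

theorem esymm_map_ringHom {S : Type*} [CommSemiring S] (f : R →+* S) (s : Multiset R) (k : ℕ) :
    (s.map f).esymm k = f (s.esymm k) := by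
  simp [esymm, powersetCard_map, map_map, map_multiset_sum, map_multiset_prod]

end Multiset

namespace Polynomial

section CommSemiring

variable {R : Type*} [CommSemiring R]

theorem _root_.Multiset.prod_map_add_C_mul_X (s : Multiset R) (y : R[X]) :
    (s.map fun r => y + C r * X).prod =
      ∑ j ∈ Finset.range (s.card + 1), C (s.esymm j) * X ^ j * y ^ (s.card - j) := by
  set t := (s.map C).map ((X : R[X]) • ·)
  have ht : ∀ j, t.esymm j = C (s.esymm j) * X ^ j := fun j => by
    rw [← Multiset.pow_smul_esymm, Multiset.esymm_map_ringHom, smul_eq_mul, mul_comm]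
  have h := congrArg (eval y) (Multiset.prod_X_add_C_eq_sum_esymm t)
  simp only [ht, eval_multiset_prod, eval_finsetSum, eval_mul, eval_pow, eval_X, eval_C] at h
  simpa [t, Multiset.map_map, Function.comp_def, mul_comm X] using h

theorem _root_.Multiset.coeff_prod_one_add_C_mul_X (s : Multiset R) (k : ℕ) :
    (s.map fun r => 1 + C r * X).prod.coeff k = s.esymm k := by
  simp only [Multiset.prod_map_add_C_mul_X, one_pow, mul_one, finsetSum_coeff, coeff_C_mul_X_pow]
  rw [Finset.sum_ite_eq]
  split_ifs with hk
  · rfl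
  · exact (Multiset.esymm_eq_zero_of_card_lt (by simpa [Nat.lt_succ_iff] using hk)).symm

theorem _root_.Multiset.esymm_map_one_add (s : Multiset R) (i : ℕ) :
    (s.map (1 + ·)).esymm i =
      ∑ j ∈ Finset.range (i + 1), ((s.card - j).choose (i - j) : R) * s.esymm j := by
  have hprod : ((s.map (1 + ·)).map fun r => 1 + C r * X).prod =
      (s.map fun r => (1 + X) + C r * X).prod := by
    rw [Multiset.map_map]
    refine congrArg Multiset.prod (Multiset.map_congr rfl fun r _ => ?_)
    rw [Function.comp_apply, C_add, C_1]
    ring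
  rw [← Multiset.coeff_prod_one_add_C_mul_X, hprod, Multiset.prod_map_add_C_mul_X,
    finsetSum_coeff]
  simp only [mul_assoc, coeff_C_mul, coeff_X_pow_mul', coeff_one_add_X_pow]
  rw [Finset.sum_range_eq_sum_range_of_eq_zero (b := i + 1)]
  · refine Finset.sum_congr rfl fun j hj => ?_
    rw [if_pos (Nat.lt_succ_iff.mp (Finset.mem_range.mp hj)), mul_comm]
  · exact fun j hj => by rw [Multiset.esymm_eq_zero_of_card_lt hj, zero_mul]
  · exact fun j hj => by rw [if_neg (by omega), mul_zero]

end CommSemiring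

theorem _root_.Multiset.esymm_eq_sum_esymm_replicate_one_add {R : Type*} [CommRing R]
    (s : Multiset R) (n j : ℕ) :
    s.esymm j = ∑ k ∈ Finset.range (j + 1),
      (-1) ^ (j - k) * ((n + (j - k) - 1).choose (j - k) : R) *
        (Multiset.replicate n 1 + s).esymm k := by
  have hseries : ∀ t : Multiset R,
      PowerSeries.mk t.esymm = (((t.map fun r => 1 + C r * X).prod : R[X]) : PowerSeries R) :=
    fun t => by
      ext k
      rw [PowerSeries.coeff_mk, coeff_coe, Multiset.coeff_prod_one_add_C_mul_X]
  have hmul : PowerSeries.mk (Multiset.replicate n 1 + s).esymm =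
      (1 + PowerSeries.X) ^ n * PowerSeries.mk s.esymm := by
    rw [hseries, hseries, Multiset.map_add, Multiset.prod_add, Multiset.map_replicate,
      Multiset.prod_replicate, C_1, one_mul, coe_mul, coe_pow, coe_add, coe_one, coe_X]
  have hinv : PowerSeries.mk s.esymm = PowerSeries.mk (Multiset.replicate n 1 + s).esymm *
      PowerSeries.mk (fun d => (-1) ^ d * ((n + d - 1).choose d : R)) := by
    rw [hmul, mul_comm _ (PowerSeries.mk s.esymm), mul_assoc,
      PowerSeries.one_add_X_pow_mul_mk_neg_one_pow_mul_choose, mul_one]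
  have h := congrArg (PowerSeries.coeff j) hinv
  rw [PowerSeries.coeff_mk, PowerSeries.coeff_mul,
    Finset.Nat.sum_antidiagonal_eq_sum_range_succ_mk] at h
  rw [h]
  refine Finset.sum_congr rfl fun k _ => ?_
  simp only [PowerSeries.coeff_mk]
  ring

end Polynomial

theorem stmt9_general (m : ℕ) (i : ℕ) :
    Bsym m i = ∑ k ∈ Finset.range (i + 1),
      (gammaCoef m i k : MvPolynomial (Fin m) ℤ) * Lsym m k := by
  set s : Multiset (MvPolynomial (Fin m) ℤ) := Finset.univ.val.map X
  have hB : Bsym m i = (s.map (1 + ·)).esymm i := by rw [Bsym, Multiset.map_map]; rfl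
  have hcard : Multiset.card s = m := by simp [s]
  rw [hB, Multiset.esymm_map_one_add, hcard]
  simp only [gammaCoef, Int.cast_sum, Finset.sum_mul]
  rw [Finset.sum_comm' (t' := Finset.range (i + 1)) (s' := fun j => Finset.range (j + 1))
    fun k j => by simp only [Finset.mem_range, Finset.mem_Icc]; omega]
  refine Finset.sum_congr rfl fun j _ => ?_
  rw [Multiset.esymm_eq_sum_esymm_replicate_one_add s m j, Finset.mul_sum]
  refine Finset.sum_congr rfl fun k _ => ?_
  rw [Lsym]
  push_cast
  ring

/-- For `m ≥ 1` and `0 ≤ i ≤ m`: `B_i = Σ_{k=0}^{i} γ_{i,k}^m · L_k` in `ℤ[x_1,…,x_m]`. -/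
theorem stmt9 (m : ℕ) (hm : 1 ≤ m) (i : ℕ) (hi : i ≤ m) :
    Bsym m i = ∑ k ∈ Finset.range (i + 1),
      (gammaCoef m i k : MvPolynomial (Fin m) ℤ) * Lsym m k :=
  stmt9_general m i
end

section
/- For every m ≥ 1, the two lower-triangular (m+1)×(m+1) integer matrices (γ_{i,k}^m)_{0 ≤ k ≤ i ≤ m} and (δ_{i,k}^m)_{0 ≤ k ≤ i ≤ m} are mutually inverse; that is, for all 0 ≤ l ≤ i ≤ m one has Σ_{k=l}^{i} γ_{i,k}^m · δ_{k,l}^m = 1 if i = l and 0 otherwise, and likewise Σ_{k=l}^{i} δ_{i,k}^m · γ_{k,l}^m = 1 if i = l and 0 otherwise. -/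
/-- `δ_{i,k}^m = Σ_{j=k}^{i} (-1)^{j-k} · binom(m-k, j-k) · binom(m, i-j)`. -/
def deltaCoef (m i k : ℕ) : ℤ :=
  ∑ j ∈ Finset.Icc k i,
    (-1 : ℤ) ^ (j - k) * ((m - k).choose (j - k) : ℤ) * (m.choose (i - j) : ℤ)

/-!
Factor `γ = B T` and `δ = S U`, where `B_{ij} = C(m-j, i-j)`, `U_{ij} = (-1)^{i-j} C(m-j, i-j)`,
and `T`, `S` are the lower-triangular Toeplitz matrices of the coefficients of `(1+X)^{-m}` and
`(1+X)^m` (note `(-1)^t mbinom(m, t) = C(-m, t)`). Chu–Vandermonde in a binomial ring gives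
`T S = 1`, binomial inversion gives `U B = 1`, hence `γ δ = B (T S) U = B U = 1`, and a one-sided
inverse of a square matrix is two-sided.
-/

open Finset Matrix

theorem Ring.choose_neg_natCast_int (m t : ℕ) :
    Ring.choose (-(m : ℤ)) t = (-1) ^ t * ((m + t - 1).choose t : ℤ) := by
  rw [Ring.choose_neg', Units.smul_def, Int.coe_negOnePow_natCast, smul_eq_mul]
  rfl

theorem Int.sum_antidiagonal_neg_one_pow_mul_choose (n : ℕ) :
    ∑ p ∈ antidiagonal n, (-1 : ℤ) ^ p.1 * (n.choose p.2 : ℤ) = if n = 0 then 1 else 0 := by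
  rw [Nat.sum_antidiagonal_eq_sum_range_succ_mk, ← Int.alternating_sum_range_choose]
  refine sum_congr rfl fun k hk => ?_
  rw [Nat.choose_symm (by simpa [Nat.lt_succ_iff] using hk)]

theorem Finset.sum_Icc_eq_sum_antidiagonal {M : Type*} [AddCommMonoid M] {k i : ℕ} (h : k ≤ i)
    (f : ℕ → ℕ → M) :
    ∑ j ∈ Icc k i, f (i - j) (j - k) = ∑ p ∈ antidiagonal (i - k), f p.1 p.2 := by
  refine sum_nbij' (fun j => (i - j, j - k)) (fun p => k + p.2) ?_ ?_ ?_ ?_ ?_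
  all_goals intro x hx
  all_goals simp only [mem_Icc, HasAntidiagonal.mem_antidiagonal, Prod.ext_iff] at hx ⊢
  all_goals omega

section LowerTriangular

variable {R : Type*} {n : ℕ}

def lowerTriangular [Zero R] (n : ℕ) (f : ℕ → ℕ → R) : Matrix (Fin n) (Fin n) R :=
  of fun i j => if (j : ℕ) ≤ i then f i j else 0

theorem lowerTriangular_congr [Zero R] {f g : ℕ → ℕ → R} (h : ∀ i k, k ≤ i → f i k = g i k) :
    lowerTriangular n f = lowerTriangular n g := by
  ext i k
  simp only [lowerTriangular, of_apply]
  split_ifs with hki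
  exacts [h i k hki, rfl]

theorem lowerTriangular_eq_one [Zero R] [One R] {f : ℕ → ℕ → R}
    (h : ∀ i k, k ≤ i → i < n → f i k = if i = k then 1 else 0) : lowerTriangular n f = 1 := by
  ext i k
  simp only [lowerTriangular, of_apply, one_apply, Fin.ext_iff]
  by_cases hki : (k : ℕ) ≤ i
  · rw [if_pos hki, h i k hki i.2]
  · rw [if_neg hki, if_neg (by omega)]

theorem lowerTriangular_mul_lowerTriangular [NonUnitalNonAssocSemiring R] (f g : ℕ → ℕ → R) :
    lowerTriangular n f * lowerTriangular n g =
      lowerTriangular n fun i k => ∑ j ∈ Icc k i, f i j * g j k := by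
  ext i k
  have hterm (j : ℕ) : (if j ≤ (i : ℕ) then f i j else 0) * (if (k : ℕ) ≤ j then g j k else 0) =
      if j ∈ Icc (k : ℕ) i then f i j * g j k else 0 := by
    simp only [mem_Icc]
    split_ifs <;> simp_all
  have hIcc : range n ∩ Icc (k : ℕ) i = Icc (k : ℕ) i :=
    inter_eq_right.2 fun j hj => by simp only [mem_Icc, mem_range] at hj ⊢; omega
  simp only [lowerTriangular, mul_apply, of_apply]
  rw [Fin.sum_univ_eq_sum_range (fun j => (if j ≤ (i : ℕ) then f i j else 0) *
      (if (k : ℕ) ≤ j then g j k else 0)), sum_congr rfl fun j _ => hterm j, sum_ite_mem, hIcc]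
  split_ifs with hki
  · rfl
  · rw [Icc_eq_empty hki, sum_empty]

def lowerToeplitz [Zero R] (n : ℕ) (a : ℕ → R) : Matrix (Fin n) (Fin n) R :=
  lowerTriangular n fun i j => a (i - j)

theorem lowerToeplitz_mul_lowerToeplitz [NonUnitalNonAssocSemiring R] (a b : ℕ → R) :
    lowerToeplitz n a * lowerToeplitz n b =
      lowerToeplitz n fun d => ∑ p ∈ antidiagonal d, a p.1 * b p.2 := by
  rw [lowerToeplitz, lowerToeplitz, lowerTriangular_mul_lowerTriangular]
  exact lowerTriangular_congr fun i k hki =>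
    sum_Icc_eq_sum_antidiagonal hki fun p q => a p * b q

theorem lowerToeplitz_choose_mul_lowerToeplitz_choose [CommRing R] [BinomialRing R] (r s : R) :
    lowerToeplitz n (Ring.choose r) * lowerToeplitz n (Ring.choose s) =
      lowerToeplitz n (Ring.choose (r + s)) := by
  rw [lowerToeplitz_mul_lowerToeplitz]
  congr with d
  exact (Ring.add_choose_eq d (Commute.all r s)).symm

theorem lowerToeplitz_choose_zero [CommRing R] [BinomialRing R] :
    lowerToeplitz n (Ring.choose (0 : R)) = 1 :=
  lowerTriangular_eq_one fun i k hki _ => by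
    rw [Ring.choose_zero_ite]
    exact if_congr (by omega) rfl rfl

theorem sum_Icc_mul_eq_ite_of_lowerTriangular_mul_eq_one [NonAssocSemiring R] {f g : ℕ → ℕ → R}
    (h : lowerTriangular n f * lowerTriangular n g = 1) {i l : ℕ} (hl : l ≤ i) (hi : i < n) :
    ∑ k ∈ Icc l i, f i k * g k l = if i = l then 1 else 0 := by
  have hentry := congr_fun₂ h ⟨i, hi⟩ ⟨l, by omega⟩
  rw [lowerTriangular_mul_lowerTriangular] at hentry
  simpa [lowerTriangular, hl, one_apply, Fin.ext_iff] using hentry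

end LowerTriangular

section Binomial

variable (m : ℕ)

def shiftedChoose : Matrix (Fin (m + 1)) (Fin (m + 1)) ℤ :=
  lowerTriangular (m + 1) fun i j => ((m - j).choose (i - j) : ℤ)

def signedShiftedChoose : Matrix (Fin (m + 1)) (Fin (m + 1)) ℤ :=
  lowerTriangular (m + 1) fun i j => (-1) ^ (i - j) * ((m - j).choose (i - j) : ℤ)

theorem signedShiftedChoose_mul_shiftedChoose : signedShiftedChoose m * shiftedChoose m = 1 := by
  rw [signedShiftedChoose, shiftedChoose, lowerTriangular_mul_lowerTriangular]
  refine lowerTriangular_eq_one fun s j hjs hs => ?_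
  have hterm : ∀ k ∈ Icc j s,
      (-1) ^ (s - k) * ((m - k).choose (s - k) : ℤ) * ((m - j).choose (k - j) : ℤ) =
        ((m - j).choose (s - j) : ℤ) * ((-1) ^ (s - k) * ((s - j).choose (k - j) : ℤ)) := by
    intro k hk
    rw [mem_Icc] at hk
    have hmul := Nat.choose_mul (n := m - j) (k := s - j) (s := k - j) (by omega)
    rw [show m - j - (k - j) = m - k by omega, show s - j - (k - j) = s - k by omega] at hmul
    have hmulℤ := congrArg (Nat.cast : ℕ → ℤ) hmul
    push_cast at hmulℤ
    linear_combination -(-1 : ℤ) ^ (s - k) * hmulℤ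
  rw [sum_congr rfl hterm, ← mul_sum,
    sum_Icc_eq_sum_antidiagonal hjs fun a b => (-1 : ℤ) ^ a * ((s - j).choose b : ℤ),
    Int.sum_antidiagonal_neg_one_pow_mul_choose]
  by_cases hsj : s = j
  · simp [hsj]
  · simp [hsj, show s - j ≠ 0 by omega]

theorem lowerTriangular_gammaCoef :
    lowerTriangular (m + 1) (gammaCoef m) =
      shiftedChoose m * lowerToeplitz (m + 1) (Ring.choose (-(m : ℤ))) := by
  rw [shiftedChoose, lowerToeplitz, lowerTriangular_mul_lowerTriangular]
  refine lowerTriangular_congr fun i k _ => sum_congr rfl fun j _ => ?_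
  rw [Ring.choose_neg_natCast_int]
  ring

theorem lowerTriangular_deltaCoef :
    lowerTriangular (m + 1) (deltaCoef m) =
      lowerToeplitz (m + 1) (Ring.choose (m : ℤ)) * signedShiftedChoose m := by
  rw [signedShiftedChoose, lowerToeplitz, lowerTriangular_mul_lowerTriangular]
  refine lowerTriangular_congr fun i k _ => sum_congr rfl fun j _ => ?_
  rw [Ring.choose_natCast]
  ring

theorem lowerTriangular_gammaCoef_mul_deltaCoef :
    lowerTriangular (m + 1) (gammaCoef m) * lowerTriangular (m + 1) (deltaCoef m) = 1 := by
  rw [lowerTriangular_gammaCoef, lowerTriangular_deltaCoef, mul_assoc,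
    ← mul_assoc (lowerToeplitz _ _), lowerToeplitz_choose_mul_lowerToeplitz_choose,
    neg_add_cancel, lowerToeplitz_choose_zero, one_mul, mul_eq_one_comm]
  exact signedShiftedChoose_mul_shiftedChoose m

end Binomial

theorem stmt11_general (m : ℕ) (i l : ℕ) (hl : l ≤ i) (hi : i ≤ m) :
    ((∑ k ∈ Finset.Icc l i, gammaCoef m i k * deltaCoef m k l)
        = if i = l then 1 else 0) ∧
    ((∑ k ∈ Finset.Icc l i, deltaCoef m i k * gammaCoef m k l)
        = if i = l then 1 else 0) :=
  have hγδ := lowerTriangular_gammaCoef_mul_deltaCoef m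
  ⟨sum_Icc_mul_eq_ite_of_lowerTriangular_mul_eq_one hγδ hl (by omega),
    sum_Icc_mul_eq_ite_of_lowerTriangular_mul_eq_one (mul_eq_one_comm.mp hγδ) hl (by omega)⟩

/-- For `m ≥ 1`, the lower-triangular matrices `(γ_{i,k}^m)` and `(δ_{i,k}^m)` are mutually
inverse: for all `0 ≤ l ≤ i ≤ m`, `Σ_{k=l}^{i} γ_{i,k}^m δ_{k,l}^m = δ_{i,l}` and
`Σ_{k=l}^{i} δ_{i,k}^m γ_{k,l}^m = δ_{i,l}` (Kronecker delta). -/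
theorem stmt11 (m : ℕ) (hm : 1 ≤ m) (i l : ℕ) (hl : l ≤ i) (hi : i ≤ m) :
    ((∑ k ∈ Finset.Icc l i, gammaCoef m i k * deltaCoef m k l)
        = if i = l then 1 else 0) ∧
    ((∑ k ∈ Finset.Icc l i, deltaCoef m i k * gammaCoef m k l)
        = if i = l then 1 else 0) :=
  stmt11_general m i l hl hi
end

section
/- Let m ≥ 1 and let A_m be the quotient of the polynomial ring ℤ[t_1,…,t_m] by the ideal generated by t_1² − 2t_1, …, t_m² − 2t_m. Let ē_0, ē_1, …, ē_m denote the images in A_m of the elementary symmetric polynomials e_0,…,e_m in t_1,…,t_m. Then the additive subgroup of A_m generated by ē_0,…,ē_m is closed under multiplication; that is, for all 0 ≤ i, j ≤ m there exist integers c_0,…,c_m with ē_i · ē_j = Σ_{k=0}^{m} c_k · ē_k. -/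
/-!
If `t² = a t` then `(1 + x t)(1 + y t) = 1 + (x + y + a x y) t`. Hence, for a family `t_s` of such
elements, the generating function `E(x) = ∏ₛ (1 + x tₛ) = Σₖ eₖ(t) xᵏ` satisfies
`E(x) E(y) = E(x + y + a x y)`, and comparing coefficients of `xⁱ yʲ` writes `eᵢ(t) eⱼ(t)` as an
integral combination of the `eₖ(t)`: the coefficient of `eₖ(t)` is that of `xⁱ yʲ` in
`(x + y + a x y)ᵏ`. In `A_m` the classes of the variables satisfy `t² = 2t`.
-/

open MvPolynomial

/-- The ideal `(t_1² - 2t_1, …, t_m² - 2t_m)` of `ℤ[t_1,…,t_m]`. -/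
noncomputable def relIdeal (m : ℕ) : Ideal (MvPolynomial (Fin m) ℤ) :=
  Ideal.span (Set.range fun j : Fin m => X j ^ 2 - 2 * X j)

/-- `A_m = ℤ[t_1,…,t_m]/(t_1² - 2t_1, …, t_m² - 2t_m)`. -/
noncomputable abbrev Amr (m : ℕ) := MvPolynomial (Fin m) ℤ ⧸ relIdeal m

/-- `ē_i`, the image in `A_m` of the `i`-th elementary symmetric polynomial in `t_1,…,t_m`. -/
noncomputable def ebar (m i : ℕ) : Amr m :=
  Ideal.Quotient.mk (relIdeal m) (esymm (Fin m) ℤ i)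

open scoped Polynomial

variable {σ R : Type*} [Fintype σ] [CommRing R]

theorem coeff_prod_one_add_X_mul_C (t : σ → R) (k : ℕ) :
    (∏ s, (1 + Polynomial.X * Polynomial.C (t s))).coeff k = aeval t (esymm σ ℤ k) := by
  classical
  have hmonomial : ∀ T : Finset σ, ∏ s ∈ T, Polynomial.X * Polynomial.C (t s)
      = Polynomial.C (∏ s ∈ T, t s) * Polynomial.X ^ T.card := by
    intro T
    rw [Finset.prod_mul_distrib, Finset.prod_const, ← map_prod, mul_comm]
  simp only [Finset.prod_one_add, hmonomial, Polynomial.finsetSum_coeff,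
    Polynomial.coeff_C_mul_X_pow, ← Finset.sum_filter, aeval_esymm_eq_multiset_esymm,
    Finset.esymm_map_val, Finset.powersetCard_eq_filter, eq_comm (a := k)]

theorem natDegree_prod_one_add_X_mul_C_le (t : σ → R) :
    (∏ s, (1 + Polynomial.X * Polynomial.C (t s))).natDegree ≤ Fintype.card σ := by
  rw [Polynomial.natDegree_le_iff_coeff_eq_zero]
  intro k hk
  rw [coeff_prod_one_add_X_mul_C, aeval_esymm_eq_multiset_esymm, Finset.esymm_map_val,
    Finset.powersetCard_eq_empty.2 hk, Finset.sum_empty]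

theorem prod_one_add_mul_mul_prod_one_add_mul (u : σ → R) (a : ℤ)
    (hu : ∀ s, u s ^ 2 = a * u s) (x y : R) :
    (∏ s, (1 + x * u s)) * ∏ s, (1 + y * u s) = ∏ s, (1 + (x + y + a * x * y) * u s) := by
  rw [← Finset.prod_mul_distrib]
  exact Finset.prod_congr rfl fun s _ => by linear_combination x * y * hu s

/-- `x + y + a x y` in `R[x][y]`, with `x` the inner variable. -/
noncomputable def mulLaw (R : Type*) [CommRing R] (a : ℤ) : R[X][X] :=
  Polynomial.C Polynomial.X + Polynomial.X +
    (a : R[X][X]) * Polynomial.C Polynomial.X * Polynomial.X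

noncomputable def mulLawCoeff (a : ℤ) (i j k : ℕ) : ℤ :=
  ((mulLaw ℤ a ^ k).coeff j).coeff i

theorem map_mulLaw (a : ℤ) :
    (mulLaw ℤ a).map (Polynomial.mapRingHom (Int.castRingHom R)) = mulLaw R a := by
  simp [mulLaw]

theorem coeff_coeff_mulLaw_pow (a : ℤ) (i j k : ℕ) :
    ((mulLaw R a ^ k).coeff j).coeff i = (mulLawCoeff a i j k : R) := by
  rw [← map_mulLaw, ← Polynomial.map_pow, Polynomial.coeff_map, Polynomial.coe_mapRingHom,
    Polynomial.coeff_map, eq_intCast, mulLawCoeff]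

theorem aeval_esymm_mul_aeval_esymm (t : σ → R) (a : ℤ)
    (ht : ∀ s, t s ^ 2 = a * t s) (i j : ℕ) :
    aeval t (esymm σ ℤ i) * aeval t (esymm σ ℤ j)
      = ∑ k ∈ Finset.range (Fintype.card σ + 1), mulLawCoeff a i j k • aeval t (esymm σ ℤ k) := by
  set E := ∏ s, (1 + Polynomial.X * Polynomial.C (t s))
  have hE : ∀ z : R[X][X], ∏ s, (1 + z * Polynomial.C (Polynomial.C (t s)))
      = E.eval₂ (Polynomial.C.comp Polynomial.C) z := by
    intro z
    simp only [E, Polynomial.eval₂_finsetProd, Polynomial.eval₂_add, Polynomial.eval₂_one,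
      Polynomial.eval₂_mul, Polynomial.eval₂_X, Polynomial.eval₂_C, RingHom.comp_apply]
  have hEx : ∏ s, (1 + Polynomial.C Polynomial.X * Polynomial.C (Polynomial.C (t s)))
      = Polynomial.C E := by
    simp only [E, map_prod, map_add, map_one, map_mul]
  have hEy : ∏ s, (1 + Polynomial.X * Polynomial.C (Polynomial.C (t s))) = E.map Polynomial.C := by
    simp only [E, Polynomial.map_prod, Polynomial.map_add, Polynomial.map_one, Polynomial.map_mul,
      Polynomial.map_X, Polynomial.map_C]
  have law : (∏ s, (1 + Polynomial.C Polynomial.X * Polynomial.C (Polynomial.C (t s)))) *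
      ∏ s, (1 + Polynomial.X * Polynomial.C (Polynomial.C (t s)))
        = ∏ s, (1 + mulLaw R a * Polynomial.C (Polynomial.C (t s))) :=
    prod_one_add_mul_mul_prod_one_add_mul (fun s => Polynomial.C (Polynomial.C (t s))) a
    (fun s => by simp only [← map_pow, ht, map_mul, map_intCast])
    (Polynomial.C Polynomial.X) Polynomial.X
  rw [hEx, hEy, hE, Polynomial.eval₂_eq_sum_range' _
    (Nat.lt_succ_of_le (natDegree_prod_one_add_X_mul_C_le t))] at law
  have hcoeff := congrArg (fun p => (p.coeff j).coeff i) law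
  simp only [RingHom.comp_apply, Polynomial.finsetSum_coeff, Polynomial.coeff_C_mul,
    Polynomial.coeff_mul_C, Polynomial.coeff_map, E, coeff_prod_one_add_X_mul_C] at hcoeff
  simpa [coeff_coeff_mulLaw_pow, zsmul_eq_mul, mul_comm] using hcoeff

theorem mk_X_sq (m : ℕ) (s : Fin m) :
    Ideal.Quotient.mk (relIdeal m) (X s) ^ 2 = (2 : ℤ) * Ideal.Quotient.mk (relIdeal m) (X s) := by
  have hrel : Ideal.Quotient.mk (relIdeal m) (X s ^ 2 - 2 * X s) = 0 :=
    Ideal.Quotient.eq_zero_iff_mem.2 (Ideal.subset_span ⟨s, rfl⟩)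
  rw [map_sub, map_pow, map_mul, map_ofNat, sub_eq_zero] at hrel
  rw [hrel, Int.cast_ofNat]

theorem ebar_eq_aeval (m k : ℕ) :
    ebar m k = aeval (fun s => Ideal.Quotient.mk (relIdeal m) (X s)) (esymm (Fin m) ℤ k) :=
  congrArg (· (esymm (Fin m) ℤ k)) (aeval_unique (Ideal.Quotient.mkₐ ℤ (relIdeal m)))

theorem stmt12_general (m : ℕ) (i j : ℕ) :
    ∃ c : Fin (m + 1) → ℤ,
      ebar m i * ebar m j = ∑ k : Fin (m + 1), c k • ebar m (k : ℕ) := by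
  refine ⟨fun k => mulLawCoeff 2 i j k, ?_⟩
  simp only [ebar_eq_aeval]
  refine (aeval_esymm_mul_aeval_esymm (R := Amr m) _ 2 (mk_X_sq m) i j).trans ?_
  rw [Fintype.card_fin, Finset.sum_range]
  rfl

/-- The additive subgroup of `A_m` generated by `ē_0, …, ē_m` is closed under multiplication:
for all `0 ≤ i, j ≤ m` there are integers `c_0, …, c_m` with
`ē_i · ē_j = Σ_{k=0}^{m} c_k · ē_k`. -/
theorem stmt12 (m : ℕ) (hm : 1 ≤ m) (i j : ℕ) (hi : i ≤ m) (hj : j ≤ m) :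
    ∃ c : Fin (m + 1) → ℤ,
      ebar m i * ebar m j = ∑ k : Fin (m + 1), c k • ebar m (k : ℕ) :=
  stmt12_general m i j
end
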